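/- As δ → 0⁺, φ(δ) is asymptotic to δ^{-1}/log(1/δ), i.e. the ratio φ(δ) / (δ^{-1}/log(1/δ)) tends to 1 as δ → 0⁺. -/

import Mathlib

open Finset Filter Real

/-- `ell k` is the product of the first `k` primes, `ℓ_k = p_1 ⋯ p_k`. -/
noncomputable def ell (k : ℕ) : ℕ := ∏ i ∈ Finset.range k, Nat.nth Nat.Prime i

/-- `phi δ = ∑_{k=1}^∞ ℓ_k^{-δ}`. -/
noncomputable def phi (δ : ℝ) : ℝ := ∑' k : ℕ, (ell (k + 1) : ℝ) ^ (-δ)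

/-!
Write `x = 1/δ` and `aₖ = log ℓ_{k+1}`, so that `φ(δ) = ∑ exp (-aₖ / x)`. The arithmetic input is
`aₖ ~ k log k`: from below since `pᵢ ≥ i + 1` gives `ℓ_{k+1} ≥ (k+1)!`, from above since
`ℓ_{k+1} ≤ p_k ^ (k+1)` and Chebyshev's bound `π(n) ≥ n ^ c` (`c < 1`) gives
`log p_k ≤ (1 + o(1)) log k`.

For any such sequence and `c < 1 < C`, the terms with `k ≤ x ^ c` are at most `1` and there are
`o(x / log x)` of them; for `k ≥ x ^ c` the terms are at most `rᵏ` with `r = exp (-c² log x / x)`,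
and for `K ≤ k ≤ x ^ C` they are at least `sᵏ` with `s = exp (-C² log x / x)`. The two geometric
sums are `~ x / (c² log x)` and `~ x / (C² log x)`.
-/

open Asymptotics Topology

lemma isEquivalent_iff_eventually_le {α : Type*} {l : Filter α} {u v : α → ℝ}
    (hv : ∀ᶠ x in l, 0 < v x) :
    u ~[l] v ↔ (∀ c < 1, ∀ᶠ x in l, c * v x ≤ u x) ∧ ∀ C > 1, ∀ᶠ x in l, u x ≤ C * v x := by
  rw [isEquivalent_iff_tendsto_one (hv.mono fun x hx => hx.ne'), tendsto_order]
  constructor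
  · rintro ⟨hlow, hup⟩
    refine ⟨fun c hc => ?_, fun C hC => ?_⟩
    · filter_upwards [hlow c hc, hv] with x hx hvx
      exact ((lt_div_iff₀ hvx).1 hx).le
    · filter_upwards [hup C hC, hv] with x hx hvx
      exact ((div_lt_iff₀ hvx).1 hx).le
  · rintro ⟨hlow, hup⟩
    refine ⟨fun c hc => ?_, fun C hC => ?_⟩
    · filter_upwards [hlow ((c + 1) / 2) (by linarith), hv] with x hx hvx
      rw [Pi.div_apply, lt_div_iff₀ hvx]
      nlinarith
    · filter_upwards [hup ((C + 1) / 2) (by linarith), hv] with x hx hvx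
      rw [Pi.div_apply, div_lt_iff₀ hvx]
      nlinarith

lemma tendsto_log_natCast_atTop : Tendsto (fun k : ℕ => log k) atTop atTop :=
  tendsto_log_atTop.comp tendsto_natCast_atTop_atTop

lemma tsum_le_add_inv_one_sub {f : ℕ → ℝ} (hf : Summable f) {r : ℝ} (hr0 : 0 ≤ r) (hr1 : r < 1)
    {n : ℕ} (hf1 : ∀ k, f k ≤ 1) (hfr : ∀ k, n ≤ k → f k ≤ r ^ k) :
    ∑' k, f k ≤ n + (1 - r)⁻¹ := by
  rw [← hf.sum_add_tsum_nat_add n, ← tsum_geometric_of_lt_one hr0 hr1]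
  refine add_le_add ?_ (((summable_nat_add_iff n).2 hf).tsum_le_tsum (fun k => ?_)
    (summable_geometric_of_lt_one hr0 hr1))
  · simpa using Finset.sum_le_card_nsmul (range n) f 1 fun k _ => hf1 k
  · exact (hfr _ (by omega)).trans (pow_le_pow_of_le_one hr0 hr1.le (by omega))

lemma inv_one_sub_exp_neg_le {μ : ℝ} (hμ : 0 < μ) : (1 - exp (-μ))⁻¹ ≤ 1 + μ⁻¹ := by
  have h : exp (-μ) ≤ (1 + μ)⁻¹ := by
    rw [exp_neg]; exact inv_anti₀ (by linarith) (by linarith [add_one_le_exp μ])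
  have h1 : 0 < 1 - exp (-μ) := by linarith [exp_lt_one_iff.2 (neg_lt_zero.2 hμ)]
  rw [inv_le_iff_one_le_mul₀ h1]
  have : (1 + μ⁻¹) * (1 - (1 + μ)⁻¹) = 1 := by field_simp; ring
  nlinarith [inv_pos.2 hμ]

lemma div_le_sum_Ico_exp_neg_mul {θ : ℝ} (hθ : 0 < θ) {m n : ℕ} (hmn : m ≤ n) :
    (exp (-(θ * m)) - exp (-(θ * n))) / θ ≤ ∑ k ∈ Ico m n, exp (-(θ * k)) := by
  have hr : exp (-θ) < 1 := exp_lt_one_iff.2 (neg_lt_zero.2 hθ)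
  have hpow (k : ℕ) : exp (-(θ * k)) = exp (-θ) ^ k := by rw [← exp_nat_mul]; ring_nf
  simp only [hpow]
  rw [geom_sum_Ico' hr.ne hmn]
  have h1 : 1 - exp (-θ) ≤ θ := by linarith [add_one_le_exp (-θ)]
  have h0 : 0 ≤ exp (-θ) ^ m - exp (-θ) ^ n :=
    sub_nonneg.2 (pow_le_pow_of_le_one (exp_pos _).le hr.le hmn)
  exact div_le_div_of_nonneg_left h0 (by linarith) h1

section ExpSum

variable {a : ℕ → ℝ} {x : ℝ}

lemma summable_exp_neg_div {c : ℝ} (hc : 0 < c) (ha : ∀ᶠ k : ℕ in atTop, c * (k * log k) ≤ a k)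
    (hx : 0 < x) : Summable fun k => exp (-(a k / x)) := by
  refine (summable_geometric_of_lt_one (exp_pos _).le
    (exp_lt_one_iff.2 (neg_lt_zero.2 (inv_pos.2 hx)))).of_norm_bounded_eventually_nat ?_
  filter_upwards [ha, tendsto_log_natCast_atTop.eventually_ge_atTop c⁻¹] with k hk hklog
  rw [inv_le_iff_one_le_mul₀ hc] at hklog
  have hka : (k : ℝ) ≤ a k := by nlinarith [k.cast_nonneg (α := ℝ)]
  rw [norm_of_nonneg (exp_pos _).le, ← exp_nat_mul, exp_le_exp, mul_neg, neg_le_neg_iff,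
    ← div_eq_mul_inv]
  gcongr

lemma tsum_exp_neg_div_mul_le (ha0 : ∀ k, 0 ≤ a k) (hs : Summable fun k => exp (-(a k / x)))
    {c : ℝ} (hc : 0 < c) {K : ℕ} (hK : ∀ k ≥ K, c * (k * log k) ≤ a k) (hx : 1 < x)
    (hxK : K ≤ x ^ c) :
    (∑' k, exp (-(a k / x))) * (log x / x) ≤ (c ^ 2)⁻¹ + (x ^ c + 2) * (log x / x) := by
  have hx0 : 0 < x := by linarith
  have hL : 0 < log x := log_pos hx
  set μ := c ^ 2 * (log x / x) with hμ_def
  have hμ : 0 < μ := by positivity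
  have hterm (k : ℕ) (hk : ⌈x ^ c⌉₊ ≤ k) : exp (-(a k / x)) ≤ exp (-μ) ^ k := by
    have hkx : x ^ c ≤ k := (Nat.le_ceil _).trans (by exact_mod_cast hk)
    have hlog : c * log x ≤ log k := by
      rw [← log_rpow hx0]; exact log_le_log (by positivity) hkx
    have hak : c * (k * (c * log x)) ≤ a k :=
      (hK k (by exact_mod_cast hxK.trans hkx)).trans' (by gcongr)
    have : k * μ ≤ a k / x := by
      rw [le_div_iff₀ hx0]
      calc k * μ * x = c * (k * (c * log x)) := by rw [hμ_def]; field_simp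
        _ ≤ a k := hak
    rw [← exp_nat_mul, exp_le_exp]
    linarith
  have hsum := tsum_le_add_inv_one_sub hs (exp_pos _).le (exp_lt_one_iff.2 (neg_lt_zero.2 hμ))
    (fun k => exp_le_one_iff.2 (neg_nonpos.2 (div_nonneg (ha0 k) hx0.le))) hterm
  have hn : (⌈x ^ c⌉₊ : ℝ) ≤ x ^ c + 1 := (Nat.ceil_lt_add_one (by positivity)).le
  calc (∑' k, exp (-(a k / x))) * (log x / x) ≤ (x ^ c + 1 + (1 + μ⁻¹)) * (log x / x) := by
        gcongr; linarith [inv_one_sub_exp_neg_le hμ]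
    _ = (c ^ 2)⁻¹ + (x ^ c + 2) * (log x / x) := by rw [hμ_def]; field_simp; ring

lemma le_tsum_exp_neg_div_mul (hs : Summable fun k => exp (-(a k / x))) {C : ℝ} (hC : 0 < C)
    {K : ℕ} (hK : ∀ k ≥ K, a k ≤ C * (k * log k)) (hx : 1 < x) (hxK : K ≤ x ^ C) :
    (exp (-(C ^ 2 * (log x / x) * K)) - exp (-(C ^ 2 * (log x * x ^ (C - 1))))) / C ^ 2 ≤
      (∑' k, exp (-(a k / x))) * (log x / x) := by
  have hx0 : 0 < x := by linarith
  have hL : 0 < log x := log_pos hx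
  set θ := C ^ 2 * (log x / x) with hθ_def
  have hθ : 0 < θ := by positivity
  set n := ⌊x ^ C⌋₊ + 1
  have hKn : K ≤ n := (Nat.le_floor hxK).trans (Nat.le_succ _)
  have hterm (k : ℕ) (hk : k ∈ Ico K n) : exp (-(θ * k)) ≤ exp (-(a k / x)) := by
    obtain ⟨hKk, hkn⟩ := mem_Ico.1 hk
    have hkx : (k : ℝ) ≤ x ^ C :=
      (Nat.cast_le.2 (Nat.lt_succ_iff.1 hkn)).trans (Nat.floor_le (by positivity))
    have hklog : k * log k ≤ k * (C * log x) := by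
      rcases k.eq_zero_or_pos with rfl | hk0
      · simp
      rw [← log_rpow hx0]
      gcongr
    rw [exp_le_exp, neg_le_neg_iff, div_le_iff₀ hx0]
    calc a k ≤ C * (k * (C * log x)) := (hK k hKk).trans (by gcongr)
      _ = θ * k * x := by rw [hθ_def]; field_simp
  have htail : C ^ 2 * (log x * x ^ (C - 1)) ≤ θ * n := by
    calc C ^ 2 * (log x * x ^ (C - 1)) = θ * x ^ C := by
          rw [rpow_sub_one hx0.ne', hθ_def]; field_simp
      _ ≤ θ * n := by gcongr; exact_mod_cast (Nat.lt_floor_add_one _).le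
  calc (exp (-(θ * K)) - exp (-(C ^ 2 * (log x * x ^ (C - 1))))) / C ^ 2
      ≤ (exp (-(θ * K)) - exp (-(θ * n))) / C ^ 2 := by gcongr
    _ = (exp (-(θ * K)) - exp (-(θ * n))) / θ * (log x / x) := by rw [hθ_def]; field_simp
    _ ≤ (∑ k ∈ Ico K n, exp (-(a k / x))) * (log x / x) := by
        gcongr
        exact (div_le_sum_Ico_exp_neg_mul hθ hKn).trans (sum_le_sum hterm)
    _ ≤ (∑' k, exp (-(a k / x))) * (log x / x) := by
        gcongr
        exact hs.sum_le_tsum _ fun k _ => (exp_pos _).le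

lemma eventually_tsum_exp_neg_div_mul_lt (ha0 : ∀ k, 0 ≤ a k)
    (hs : ∀ x > 0, Summable fun k => exp (-(a k / x))) {c : ℝ} (hc0 : 0 < c) (hc1 : c < 1)
    (ha : ∀ᶠ k : ℕ in atTop, c * (k * log k) ≤ a k) {b : ℝ} (hb : (c ^ 2)⁻¹ < b) :
    ∀ᶠ x in atTop, (∑' k, exp (-(a k / x))) * (log x / x) < b := by
  obtain ⟨K, hK⟩ := eventually_atTop.1 ha
  have herr : Tendsto (fun x => (x ^ c + 2) * (log x / x)) atTop (𝓝 0) := by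
    have h1 := (isLittleO_log_rpow_atTop (sub_pos.2 hc1)).tendsto_div_nhds_zero
    have h2 := isLittleO_log_id_atTop.tendsto_div_nhds_zero
    have h3 : Tendsto (fun x => log x / x ^ (1 - c) + 2 * (log x / x)) atTop (𝓝 0) := by
      simpa using h1.add (h2.const_mul 2)
    refine h3.congr' ?_
    filter_upwards [eventually_gt_atTop 0] with x hx
    rw [rpow_sub hx, rpow_one]
    field_simp
  filter_upwards [herr.eventually (gt_mem_nhds (sub_pos.2 hb)), eventually_gt_atTop 1,
    (tendsto_rpow_atTop hc0).eventually_ge_atTop (K : ℝ)] with x herrx hx hxK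
  linarith [tsum_exp_neg_div_mul_le ha0 (hs x (by linarith)) hc0 hK hx hxK]

lemma eventually_lt_tsum_exp_neg_div_mul (hs : ∀ x > 0, Summable fun k => exp (-(a k / x)))
    {C : ℝ} (hC : 1 < C) (ha : ∀ᶠ k : ℕ in atTop, a k ≤ C * (k * log k)) {b : ℝ}
    (hb : b < (C ^ 2)⁻¹) :
    ∀ᶠ x in atTop, b < (∑' k, exp (-(a k / x))) * (log x / x) := by
  obtain ⟨K, hK⟩ := eventually_atTop.1 ha
  have hbound : Tendsto (fun x => (exp (-(C ^ 2 * (log x / x) * K)) -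
      exp (-(C ^ 2 * (log x * x ^ (C - 1))))) / C ^ 2) atTop (𝓝 (C ^ 2)⁻¹) := by
    have h1 : Tendsto (fun x => exp (-(C ^ 2 * (log x / x) * K))) atTop (𝓝 1) := by
      simpa using (((isLittleO_log_id_atTop.tendsto_div_nhds_zero).const_mul (C ^ 2)).mul_const
        (K : ℝ)).neg.rexp
    have h2 : Tendsto (fun x => exp (-(C ^ 2 * (log x * x ^ (C - 1))))) atTop (𝓝 0) :=
      tendsto_exp_atBot.comp <| tendsto_neg_atTop_atBot.comp <|
        (tendsto_log_atTop.atTop_mul_atTop₀ (tendsto_rpow_atTop (sub_pos.2 hC))).const_mul_atTop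
          (by positivity)
    simpa using (h1.sub h2).div_const (C ^ 2)
  filter_upwards [hbound.eventually (lt_mem_nhds hb), eventually_gt_atTop 1,
    (tendsto_rpow_atTop (show 0 < C by linarith)).eventually_ge_atTop (K : ℝ)] with x hbx hx hxK
  exact hbx.trans_le (le_tsum_exp_neg_div_mul (hs x (by linarith)) (by linarith) hK hx hxK)

theorem tendsto_tsum_exp_neg_div_mul (ha0 : ∀ k, 0 ≤ a k) (ha : a ~[atTop] fun k => k * log k) :
    Tendsto (fun x => (∑' k, exp (-(a k / x))) * (log x / x)) atTop (𝓝 1) := by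
  obtain ⟨hlow, hup⟩ := (isEquivalent_iff_eventually_le <| (tendsto_natCast_atTop_atTop.atTop_mul_atTop₀
    tendsto_log_natCast_atTop).eventually_gt_atTop 0).1 ha
  have hs (x : ℝ) (hx : 0 < x) : Summable fun k => exp (-(a k / x)) :=
    summable_exp_neg_div one_half_pos (hlow _ one_half_lt_one) hx
  have hsq : Tendsto (fun c : ℝ => (c ^ 2)⁻¹) (𝓝 1) (𝓝 1) := by
    simpa using ((continuous_pow 2).tendsto (1 : ℝ)).inv₀ (by norm_num)
  refine tendsto_order.2 ⟨fun b hb => ?_, fun b hb => ?_⟩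
  · obtain ⟨C, hbC, hC⟩ := (((hsq.mono_left nhdsWithin_le_nhds).eventually (lt_mem_nhds hb)).and
      (self_mem_nhdsWithin (s := Set.Ioi 1))).exists
    exact eventually_lt_tsum_exp_neg_div_mul hs hC (hup C hC) hbC
  · obtain ⟨c, hcb, hc0, hc1⟩ := (((hsq.mono_left nhdsWithin_le_nhds).eventually
      (gt_mem_nhds hb)).and (Ioo_mem_nhdsLT zero_lt_one)).exists
    exact eventually_tsum_exp_neg_div_mul_lt ha0 hs hc0 hc1 (hlow c hc1) hcb

end ExpSum

lemma factorial_le_ell (n : ℕ) : n.factorial ≤ ell n := by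
  rw [← Finset.prod_range_add_one_eq_factorial, ell]
  exact Finset.prod_le_prod' fun i _ => (Nat.add_two_le_nth_prime i).trans' (by omega)

lemma ell_pos (n : ℕ) : 0 < ell n := (Nat.factorial_pos n).trans_le (factorial_le_ell n)

lemma ell_succ_le_pow (n : ℕ) : ell (n + 1) ≤ Nat.nth Nat.Prime n ^ (n + 1) :=
  calc ell (n + 1) ≤ Nat.nth Nat.Prime n ^ #(range (n + 1)) :=
        Finset.prod_le_pow_card _ _ _ fun i hi =>
          Nat.nth_monotone Nat.infinite_setOfPred_prime (Nat.lt_succ_iff.1 (mem_range.1 hi))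
    _ = Nat.nth Nat.Prime n ^ (n + 1) := by rw [card_range]

lemma primeCounting_nth_prime (n : ℕ) : Nat.primeCounting (Nat.nth Nat.Prime n) = n + 1 :=
  Nat.count_nth_succ_of_infinite Nat.infinite_setOfPred_prime n

lemma isLittleO_rpow_mul_log_add_log {c : ℝ} (hc : c < 1) :
    (fun x : ℝ => x ^ c * log x + log (x + 1)) =o[atTop] id := by
  have h1 : (fun x : ℝ => x ^ c * log x) =o[atTop] id := by
    refine ((isBigO_refl (fun x : ℝ => x ^ c) _).mul_isLittleO
      (isLittleO_log_rpow_atTop (sub_pos.2 hc))).congr' EventuallyEq.rfl ?_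
    filter_upwards [eventually_gt_atTop 0] with x hx
    rw [← rpow_add hx, add_sub_cancel, rpow_one, id]
  have h2 : (fun x : ℝ => log (x + 1)) =o[atTop] id :=
    (isLittleO_log_id_atTop.comp_tendsto (tendsto_atTop_add_const_right _ 1 tendsto_id))
      |>.trans_isBigO ((isBigO_refl _ _).add (isLittleO_const_id_atTop 1).isBigO)
  exact h1.add h2

lemma eventually_rpow_le_primeCounting {c : ℝ} (hc : c < 1) :
    ∀ᶠ n : ℕ in atTop, (n : ℝ) ^ c ≤ Nat.primeCounting n := by
  have h := (isLittleO_rpow_mul_log_add_log hc).bound (log_pos one_lt_two)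
  filter_upwards [tendsto_natCast_atTop_atTop.eventually h, eventually_ge_atTop 2] with n hn hn2
  have hlog : 0 < log n := log_pos (by exact_mod_cast hn2)
  refine le_trans ?_ (Chebyshev.pi_ge n)
  rw [le_div_iff₀ hlog]
  have := (le_norm_self _).trans hn
  rw [id, Real.norm_natCast] at this
  linarith

lemma eventually_log_nth_prime_le {C : ℝ} (hC : 1 < C) :
    ∀ᶠ k : ℕ in atTop, log (Nat.nth Nat.Prime k) ≤ C * log k := by
  set c := 2 / (1 + C)
  have hc0 : 0 < c := by positivity
  have hcC : 1 < c * C := by rw [div_mul_eq_mul_div, one_lt_div (by positivity)]; linarith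
  filter_upwards [(Nat.nth_strictMono Nat.infinite_setOfPred_prime).tendsto_atTop.eventually
      (eventually_rpow_le_primeCounting (c := c) (by rw [div_lt_one (by positivity)]; linarith)),
    tendsto_log_natCast_atTop.eventually_ge_atTop (log 2 / (c * C - 1)),
    eventually_ge_atTop 1] with k hk hk2 hk1
  rw [primeCounting_nth_prime, Nat.cast_add_one] at hk
  have hp : (0 : ℝ) < Nat.nth Nat.Prime k := by exact_mod_cast (Nat.prime_nth_prime k).pos
  have hk0 : (0 : ℝ) < k := by exact_mod_cast hk1
  rw [div_le_iff₀ (by linarith)] at hk2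
  have : c * log (Nat.nth Nat.Prime k) ≤ c * (C * log k) :=
    calc c * log (Nat.nth Nat.Prime k) = log ((Nat.nth Nat.Prime k : ℝ) ^ c) :=
          (log_rpow hp c).symm
      _ ≤ log (2 * k) :=
          log_le_log (by positivity) (by linarith [(Nat.one_le_cast (α := ℝ)).2 hk1])
      _ = log 2 + log k := log_mul two_ne_zero hk0.ne'
      _ ≤ c * (C * log k) := by nlinarith
  exact le_of_mul_le_mul_left this hc0

lemma mul_log_sub_le_log_factorial (n : ℕ) : n * log n - n ≤ log (n.factorial : ℕ) := by
  rcases n.eq_zero_or_pos with rfl | hn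
  · simp
  have := Stirling.le_log_factorial_stirling hn.ne'
  have : 0 ≤ log n := log_natCast_nonneg n
  have : 0 ≤ log (2 * π) := log_nonneg (by linarith [pi_gt_three])
  linarith

lemma isEquivalent_log_ell :
    (fun k : ℕ => log (ell (k + 1))) ~[atTop] fun k => (k : ℝ) * log k := by
  have hpos : ∀ᶠ k : ℕ in atTop, 0 < (k : ℝ) * log k := by
    filter_upwards [eventually_ge_atTop 2] with k hk
    exact mul_pos (by positivity) (log_pos (by exact_mod_cast hk))
  rw [isEquivalent_iff_eventually_le hpos]
  refine ⟨fun c hc => ?_, fun C hC => ?_⟩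
  · filter_upwards [tendsto_log_natCast_atTop.eventually_ge_atTop (1 - c)⁻¹] with k hk
    rw [inv_le_iff_one_le_mul₀ (by linarith)] at hk
    have hfac : log (k.factorial : ℕ) ≤ log (ell (k + 1)) :=
      log_le_log (by exact_mod_cast k.factorial_pos)
        (by exact_mod_cast (Nat.factorial_le k.le_succ).trans (factorial_le_ell _))
    have := mul_log_sub_le_log_factorial k
    have hk0 : (0 : ℝ) ≤ k := k.cast_nonneg
    nlinarith
  · set C' := (1 + C) / 2 with hC'
    filter_upwards [eventually_log_nth_prime_le (C := C') (by linarith [hC']),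
      tendsto_natCast_atTop_atTop.eventually_ge_atTop (C' / (C - C'))] with k hk hkC
    rw [div_le_iff₀ (by linarith [hC'])] at hkC
    have hlogk : 0 ≤ log k := log_natCast_nonneg k
    calc log (ell (k + 1)) ≤ log ((Nat.nth Nat.Prime k : ℝ) ^ (k + 1)) :=
          log_le_log (by exact_mod_cast ell_pos _) (by exact_mod_cast ell_succ_le_pow k)
      _ = (k + 1) * log (Nat.nth Nat.Prime k) := by rw [log_pow]; push_cast; ring
      _ ≤ (k + 1) * (C' * log k) := by gcongr
      _ ≤ C * (k * log k) := by nlinarith [hC']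

/-- `φ(δ) ~ δ⁻¹/log(1/δ)` as `δ → 0⁺`. -/
theorem phi_asymptotics :
    Filter.Tendsto (fun δ : ℝ => phi δ / (δ⁻¹ / Real.log (1 / δ)))
      (nhdsWithin 0 (Set.Ioi 0)) (nhds 1) := by
  refine ((tendsto_tsum_exp_neg_div_mul (fun k => log_natCast_nonneg _)
    isEquivalent_log_ell).comp tendsto_inv_nhdsGT_zero).congr fun δ => ?_
  have hterm (k : ℕ) : exp (-(log (ell (k + 1)) / δ⁻¹)) = (ell (k + 1) : ℝ) ^ (-δ) := by
    rw [rpow_def_of_pos (by exact_mod_cast ell_pos _), div_inv_eq_mul, mul_neg]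
  simp only [Function.comp_apply, hterm]
  rw [phi, one_div, div_div_eq_mul_div, mul_div_assoc]
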